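/- arXiv:2510.01905 — 4 statements merged into one kernel-verified Lean document; each statement's English description precedes it below -/
import Mathlib

section
/- Let P₁ and P₂ be linear subspaces of ℝⁿ of the same dimension, with orthogonal projections π₁, π₂. Then the operator norm of π₁ − π₂ is at most sup{dist(z, P₂) : z ∈ P₁, ‖z‖ ≤ 1} + sup{dist(z, P₁) : z ∈ P₂, ‖z‖ ≤ 1}. -/
/-!
With `δ(P, Q) = directedGap P Q`, write `π₁ - π₂ = π₁ (1 - π₂) - (1 - π₁) π₂`. The second term
sends `x` to `y - π₁ y` with `y = π₂ x`, whose norm is `dist(y, P₁) ≤ δ(P₂, P₁) ‖x‖`. For the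
first, `u = x - π₂ x` is orthogonal to `P₂`, so `v = π₁ u` satisfies
`‖v‖² = ⟪v, u⟫ = ⟪v - π₂ v, u⟫ ≤ dist(v, P₂) ‖u‖ ≤ δ(P₁, P₂) ‖v‖ ‖u‖`, i.e. `‖v‖ ≤ δ(P₁, P₂) ‖x‖`.
-/

open Metric

namespace Submodule

variable {E : Type*} [NormedAddCommGroup E] [InnerProductSpace ℝ E]

noncomputable def directedGap (P Q : Submodule ℝ E) : ℝ :=
  ⨆ z : P, ⨆ _ : ‖(z : E)‖ ≤ 1, infDist (z : E) (Q : Set E)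

variable {P Q : Submodule ℝ E}

theorem infDist_le_norm (Q : Submodule ℝ E) (z : E) : infDist z Q ≤ ‖z‖ := by
  simpa using infDist_le_dist_of_mem (x := z) Q.zero_mem

theorem infDist_le_directedGap {z : E} (hz : z ∈ P) (hz₁ : ‖z‖ ≤ 1) :
    infDist z Q ≤ directedGap P Q := by
  have hbdd : BddAbove (Set.range fun w : P => ⨆ _ : ‖(w : E)‖ ≤ 1, infDist (w : E) Q) := by
    refine ⟨1, ?_⟩
    rintro _ ⟨w, rfl⟩
    exact Real.iSup_le (fun hw => (infDist_le_norm Q w).trans hw) zero_le_one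
  have h := le_ciSup hbdd ⟨z, hz⟩
  rwa [ciSup_pos hz₁] at h

theorem directedGap_nonneg : 0 ≤ directedGap P Q :=
  infDist_nonneg.trans (infDist_le_directedGap P.zero_mem (by simp))

variable [Q.HasOrthogonalProjection]

theorem infDist_eq_norm_sub_starProjection (v : E) :
    infDist v Q = ‖v - Q.starProjection v‖ := by
  rw [starProjection_minimal, infDist_eq_iInf]
  simp_rw [dist_eq_norm]
  rfl

theorem norm_sub_starProjection_le_directedGap_mul {v : E} (hv : v ∈ P) :
    ‖v - Q.starProjection v‖ ≤ directedGap P Q * ‖v‖ := by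
  rcases eq_or_ne v 0 with rfl | hv₀
  · simp
  set c : ℝ := ‖v‖⁻¹
  have hc : ‖v‖ * c = 1 := mul_inv_cancel₀ (norm_ne_zero_iff.mpr hv₀)
  calc ‖v - Q.starProjection v‖ = ‖v‖ * ‖c • v - Q.starProjection (c • v)‖ := by
        rw [map_smul, ← smul_sub, norm_smul, Real.norm_of_nonneg (by positivity), ← mul_assoc, hc,
          one_mul]
    _ = ‖v‖ * infDist (c • v) Q := by rw [infDist_eq_norm_sub_starProjection]
    _ ≤ ‖v‖ * directedGap P Q := by
        gcongr
        exact infDist_le_directedGap (P.smul_mem c hv) (norm_smul_inv_norm hv₀).le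
    _ = directedGap P Q * ‖v‖ := mul_comm _ _

theorem norm_starProjection_le_directedGap_mul [P.HasOrthogonalProjection] {u : E} (hu : u ∈ Qᗮ) :
    ‖P.starProjection u‖ ≤ directedGap P Q * ‖u‖ := by
  set v := P.starProjection u
  have hv : ‖v‖ ^ 2 ≤ directedGap P Q * ‖u‖ * ‖v‖ :=
    calc ‖v‖ ^ 2 = inner ℝ v u := by
          rw [← real_inner_self_eq_norm_sq, ← inner_starProjection_left_eq_right,
            starProjection_eq_self_iff.mpr (P.starProjection_apply_mem u)]
      _ = inner ℝ (v - Q.starProjection v) u := by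
          rw [inner_sub_left, inner_right_of_mem_orthogonal (Q.starProjection_apply_mem v) hu,
            sub_zero]
      _ ≤ ‖v - Q.starProjection v‖ * ‖u‖ := real_inner_le_norm _ _
      _ ≤ directedGap P Q * ‖v‖ * ‖u‖ := by
          gcongr
          exact norm_sub_starProjection_le_directedGap_mul (P.starProjection_apply_mem u)
      _ = directedGap P Q * ‖u‖ * ‖v‖ := by ring
  have := mul_nonneg (directedGap_nonneg (P := P) (Q := Q)) (norm_nonneg u)
  nlinarith [norm_nonneg v]

theorem norm_starProjection_sub_starProjection_le [P.HasOrthogonalProjection] :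
    ‖P.starProjection - Q.starProjection‖ ≤ directedGap P Q + directedGap Q P := by
  refine ContinuousLinearMap.opNorm_le_bound _
    (add_nonneg directedGap_nonneg directedGap_nonneg) fun x => ?_
  set y := Q.starProjection x
  have hsplit : (P.starProjection - Q.starProjection) x =
      P.starProjection (x - y) - (y - P.starProjection y) := by
    simp only [sub_apply, map_sub, y]
    abel
  have hy : ‖y‖ ≤ ‖x‖ := Q.norm_starProjection_apply_le x
  have hxy : ‖x - y‖ ≤ ‖x‖ := by
    simpa only [starProjection_orthogonal_val] using Qᗮ.norm_starProjection_apply_le x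
  calc ‖(P.starProjection - Q.starProjection) x‖
      ≤ ‖P.starProjection (x - y)‖ + ‖y - P.starProjection y‖ := hsplit ▸ norm_sub_le _ _
    _ ≤ directedGap P Q * ‖x - y‖ + directedGap Q P * ‖y‖ :=
        add_le_add (norm_starProjection_le_directedGap_mul (Q.sub_starProjection_mem_orthogonal x))
          (norm_sub_starProjection_le_directedGap_mul (Q.starProjection_apply_mem x))
    _ ≤ directedGap P Q * ‖x‖ + directedGap Q P * ‖x‖ :=
        add_le_add (mul_le_mul_of_nonneg_left hxy directedGap_nonneg)
          (mul_le_mul_of_nonneg_left hy directedGap_nonneg)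
    _ = (directedGap P Q + directedGap Q P) * ‖x‖ := by ring

end Submodule

theorem orthogonalProjection_dist_le_general {n : ℕ}
    (P₁ P₂ : Submodule ℝ (EuclideanSpace ℝ (Fin n))) :
    ‖P₁.subtypeL.comp (Submodule.orthogonalProjection P₁) -
        P₂.subtypeL.comp (Submodule.orthogonalProjection P₂)‖ ≤
      (⨆ z : P₁, ⨆ _ : ‖(z : EuclideanSpace ℝ (Fin n))‖ ≤ 1,
        Metric.infDist (z : EuclideanSpace ℝ (Fin n))
          (P₂ : Set (EuclideanSpace ℝ (Fin n)))) +
      (⨆ z : P₂, ⨆ _ : ‖(z : EuclideanSpace ℝ (Fin n))‖ ≤ 1,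
        Metric.infDist (z : EuclideanSpace ℝ (Fin n))
          (P₁ : Set (EuclideanSpace ℝ (Fin n)))) :=
  Submodule.norm_starProjection_sub_starProjection_le

/-- Let `P₁, P₂` be linear subspaces of `ℝⁿ` of the same dimension, with orthogonal
projections `π₁, π₂`. Then `‖π₁ − π₂‖` (operator norm) is at most
`sup{dist(z, P₂) : z ∈ P₁, ‖z‖ ≤ 1} + sup{dist(z, P₁) : z ∈ P₂, ‖z‖ ≤ 1}`. -/
theorem orthogonalProjection_dist_le {n : ℕ}
    (P₁ P₂ : Submodule ℝ (EuclideanSpace ℝ (Fin n)))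
    (hdim : Module.finrank ℝ P₁ = Module.finrank ℝ P₂) :
    ‖P₁.subtypeL.comp (Submodule.orthogonalProjection P₁) -
        P₂.subtypeL.comp (Submodule.orthogonalProjection P₂)‖ ≤
      (⨆ z : P₁, ⨆ _ : ‖(z : EuclideanSpace ℝ (Fin n))‖ ≤ 1,
        Metric.infDist (z : EuclideanSpace ℝ (Fin n))
          (P₂ : Set (EuclideanSpace ℝ (Fin n)))) +
      (⨆ z : P₂, ⨆ _ : ‖(z : EuclideanSpace ℝ (Fin n))‖ ≤ 1,
        Metric.infDist (z : EuclideanSpace ℝ (Fin n))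
          (P₁ : Set (EuclideanSpace ℝ (Fin n)))) :=
  orthogonalProjection_dist_le_general P₁ P₂
end

section
/- Let Q₁, Q₂ be linear subspaces of ℝⁿ of the same dimension and let x, y be unit vectors. Suppose that for all u ∈ Q₂ one has |⟪u, y⟫| ≤ (1/200)‖u‖. Then for every z ∈ Q₂ + ℝy with ‖z‖ ≤ 1, one has dist(z, Q₁ + ℝx) ≤ 2·(δ(Q₁,Q₂) + δ(ℝx, ℝy)), where δ(V,W) := sup{dist(w, V) : w ∈ W, ‖w‖ ≤ 1}. -/
/-!
Write `z = u + v` with `u ∈ Q₂` and `v ∈ ℝy`. Near-orthogonality of `y` to `Q₂` makes this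
decomposition well conditioned, `‖u‖ + ‖v‖ ≤ 2‖z‖ ≤ 2`. The distance to a subspace is
homogeneous, so `dist(u, Q₁) ≤ ‖u‖ δ(Q₁,Q₂)` and `dist(v, ℝx) ≤ ‖v‖ δ(ℝx,ℝy)`, and the distance
of `u + v` to `Q₁ + ℝx` is at most the sum of these two.
-/

open Metric

/-- The one-sided Hausdorff deviation `δ(V,W) = sup{dist(w, V) : w ∈ W, ‖w‖ ≤ 1}`. -/
noncomputable def subDev {n : ℕ}
    (V W : Submodule ℝ (EuclideanSpace ℝ (Fin n))) : ℝ :=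
  ⨆ w : W, ⨆ _ : ‖(w : EuclideanSpace ℝ (Fin n))‖ ≤ 1,
    Metric.infDist (w : EuclideanSpace ℝ (Fin n)) (V : Set (EuclideanSpace ℝ (Fin n)))

open scoped Pointwise RealInnerProductSpace

theorem norm_add_norm_le_two_mul_norm_add {E : Type*} [NormedAddCommGroup E]
    [InnerProductSpace ℝ E] {u v : E} {c : ℝ} (hc : c ≤ 1 / 2)
    (huv : |⟪u, v⟫| ≤ c * (‖u‖ * ‖v‖)) : ‖u‖ + ‖v‖ ≤ 2 * ‖u + v‖ := by
  have hsq : ‖u + v‖ ^ 2 = ‖u‖ ^ 2 + 2 * ⟪u, v⟫ + ‖v‖ ^ 2 := norm_add_sq_real u v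
  have hlow : -(c * (‖u‖ * ‖v‖)) ≤ ⟪u, v⟫ := (abs_le.mp huv).1
  have hprod : 0 ≤ ‖u‖ * ‖v‖ := by positivity
  refine (pow_le_pow_iff_left₀ (by positivity) (by positivity) two_ne_zero).1 ?_
  nlinarith [sq_nonneg (‖u‖ - ‖v‖)]

theorem Submodule.smul_coe_of_ne_zero {K M : Type*} [Field K] [AddCommGroup M] [Module K M]
    {c : K} (hc : c ≠ 0) (V : Submodule K M) : c • (V : Set M) = V := by
  ext z
  rw [Set.mem_smul_set_iff_inv_smul_mem₀ hc]
  exact V.smul_mem_iff (inv_ne_zero hc)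

theorem Metric.infDist_smul_submodule {𝕜 E : Type*} [NormedField 𝕜] [SeminormedAddCommGroup E]
    [NormedSpace 𝕜 E] (c : 𝕜) (V : Submodule 𝕜 E) (x : E) :
    infDist (c • x) (V : Set E) = ‖c‖ * infDist x V := by
  rcases eq_or_ne c 0 with rfl | hc
  · simp [infDist_zero_of_mem V.zero_mem]
  · rw [← infDist_smul₀ hc, V.smul_coe_of_ne_zero hc]

theorem Metric.infDist_add_le {E : Type*} [SeminormedAddCommGroup E] (u v : E) (s t : Set E) :
    infDist (u + v) (s + t) ≤ infDist u s + infDist v t := by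
  rcases s.eq_empty_or_nonempty with rfl | hs
  · simp [infDist_nonneg]
  rcases t.eq_empty_or_nonempty with rfl | ht
  · simp [infDist_nonneg]
  have hpq : ∀ p ∈ s, ∀ q ∈ t, infDist (u + v) (s + t) ≤ dist u p + dist v q := fun p hp q hq =>
    (infDist_le_dist_of_mem (Set.add_mem_add hp hq)).trans (dist_add_add_le u v p q)
  have hv : ∀ p ∈ s, infDist (u + v) (s + t) - dist u p ≤ infDist v t := fun p hp =>
    (le_infDist ht).2 fun q hq => by linarith [hpq p hp q hq]
  have hu : infDist (u + v) (s + t) - infDist v t ≤ infDist u s :=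
    (le_infDist hs).2 fun p hp => by linarith [hv p hp]
  linarith

section subDev

variable {n : ℕ} (V W : Submodule ℝ (EuclideanSpace ℝ (Fin n)))

theorem subDev_nonneg : 0 ≤ subDev V W :=
  Real.iSup_nonneg fun _ => Real.iSup_nonneg fun _ => infDist_nonneg

theorem infDist_le_subDev {w : EuclideanSpace ℝ (Fin n)} (hw : w ∈ W) (hw1 : ‖w‖ ≤ 1) :
    infDist w (V : Set (EuclideanSpace ℝ (Fin n))) ≤ subDev V W := by
  have hbdd : BddAbove (Set.range fun w : W =>
      ⨆ _ : ‖(w : EuclideanSpace ℝ (Fin n))‖ ≤ 1,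
        infDist (w : EuclideanSpace ℝ (Fin n)) (V : Set (EuclideanSpace ℝ (Fin n)))) :=
    ⟨1, Set.forall_mem_range.2 fun w => Real.iSup_le (fun hw1 =>
      (infDist_le_dist_of_mem V.zero_mem).trans (by simpa using hw1)) zero_le_one⟩
  refine le_ciSup_of_le hbdd ⟨w, hw⟩ ?_
  rw [ciSup_pos hw1]

theorem infDist_le_norm_mul_subDev {w : EuclideanSpace ℝ (Fin n)} (hw : w ∈ W) :
    infDist w (V : Set (EuclideanSpace ℝ (Fin n))) ≤ ‖w‖ * subDev V W := by
  rcases eq_or_ne w 0 with rfl | hw0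
  · simp [infDist_zero_of_mem V.zero_mem]
  have hnorm : ‖w‖ ≠ 0 := norm_ne_zero_iff.mpr hw0
  have hunit : ‖‖w‖⁻¹ • w‖ = 1 := by rw [norm_smul, norm_inv, norm_norm, inv_mul_cancel₀ hnorm]
  calc infDist w (V : Set (EuclideanSpace ℝ (Fin n)))
      = ‖w‖ * infDist (‖w‖⁻¹ • w) V := by
        rw [← Real.norm_of_nonneg (norm_nonneg w), ← infDist_smul_submodule, norm_norm,
          smul_smul, mul_inv_cancel₀ hnorm, one_smul]
    _ ≤ ‖w‖ * subDev V W :=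
        mul_le_mul_of_nonneg_left (infDist_le_subDev V W (W.smul_mem _ hw) hunit.le)
          (norm_nonneg w)

end subDev

theorem dist_to_sum_span_le_general {n : ℕ}
    (Q₁ Q₂ : Submodule ℝ (EuclideanSpace ℝ (Fin n)))
    (x y : EuclideanSpace ℝ (Fin n)) (hy : ‖y‖ = 1)
    (horth : ∀ u ∈ Q₂, |(inner ℝ u y : ℝ)| ≤ (1 / 200) * ‖u‖) :
    ∀ z ∈ (Q₂ ⊔ Submodule.span ℝ {y}), ‖z‖ ≤ 1 →
      Metric.infDist z ((Q₁ ⊔ Submodule.span ℝ {x} : Submodule ℝ _) :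
          Set (EuclideanSpace ℝ (Fin n))) ≤
        2 * (subDev Q₁ Q₂ + subDev (Submodule.span ℝ {x}) (Submodule.span ℝ {y})) := by
  intro z hz hz1
  obtain ⟨u, hu, v, hv, rfl⟩ := Submodule.mem_sup.mp hz
  have hinner : |⟪u, v⟫| ≤ 1 / 200 * (‖u‖ * ‖v‖) := by
    obtain ⟨t, rfl⟩ := Submodule.mem_span_singleton.mp hv
    rw [real_inner_smul_right, abs_mul, norm_smul, hy, Real.norm_eq_abs]
    nlinarith [mul_le_mul_of_nonneg_left (horth u hu) (abs_nonneg t)]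
  have hsum : ‖u‖ + ‖v‖ ≤ 2 :=
    (norm_add_norm_le_two_mul_norm_add (by norm_num) hinner).trans (by linarith)
  calc infDist (u + v) ((Q₁ ⊔ Submodule.span ℝ {x} : Submodule ℝ _) :
          Set (EuclideanSpace ℝ (Fin n)))
      ≤ infDist u Q₁ + infDist v (Submodule.span ℝ {x}) := by
        rw [Submodule.coe_sup]
        exact infDist_add_le u v _ _
    _ ≤ ‖u‖ * subDev Q₁ Q₂ + ‖v‖ * subDev (Submodule.span ℝ {x}) (Submodule.span ℝ {y}) :=
        add_le_add (infDist_le_norm_mul_subDev _ _ hu) (infDist_le_norm_mul_subDev _ _ hv)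
    _ ≤ 2 * (subDev Q₁ Q₂ + subDev (Submodule.span ℝ {x}) (Submodule.span ℝ {y})) := by
        nlinarith [subDev_nonneg Q₁ Q₂, subDev_nonneg (Submodule.span ℝ {x}) (Submodule.span ℝ {y}),
          norm_nonneg u, norm_nonneg v]

/-- Let `Q₁, Q₂` be subspaces of `ℝⁿ` of the same dimension, `x, y` unit vectors, with `y`
nearly orthogonal to `Q₂`: `|⟪u, y⟫| ≤ (1/200)‖u‖` for `u ∈ Q₂`. Then for every
`z ∈ Q₂ + ℝy` with `‖z‖ ≤ 1`, `dist(z, Q₁ + ℝx) ≤ 2·(δ(Q₁,Q₂) + δ(ℝx, ℝy))`. -/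
theorem dist_to_sum_span_le {n : ℕ}
    (Q₁ Q₂ : Submodule ℝ (EuclideanSpace ℝ (Fin n)))
    (hdim : Module.finrank ℝ Q₁ = Module.finrank ℝ Q₂)
    (x y : EuclideanSpace ℝ (Fin n)) (hx : ‖x‖ = 1) (hy : ‖y‖ = 1)
    (horth : ∀ u ∈ Q₂, |(inner ℝ u y : ℝ)| ≤ (1 / 200) * ‖u‖) :
    ∀ z ∈ (Q₂ ⊔ Submodule.span ℝ {y}), ‖z‖ ≤ 1 →
      Metric.infDist z ((Q₁ ⊔ Submodule.span ℝ {x} : Submodule ℝ _) :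
          Set (EuclideanSpace ℝ (Fin n))) ≤
        2 * (subDev Q₁ Q₂ + subDev (Submodule.span ℝ {x}) (Submodule.span ℝ {y})) :=
  dist_to_sum_span_le_general Q₁ Q₂ x y hy horth
end

section
/- Let f : [t₀, t₁] → ℝⁿ be continuous and suppose there is c > 0 such that for all s < t in [t₀, t₁], ⟪f(s), f(t) − f(s)⟫ ≥ c‖f(s)‖·‖f(t) − f(s)‖. Then for all s < t, ‖f(t)‖ − ‖f(s)‖ ≥ c‖f(t) − f(s)‖; in particular t ↦ ‖f(t)‖ is strictly increasing wherever f is non-constant. -/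
/-! For `c ≤ 1`, expanding `‖f t‖² = ‖f s + (f t - f s)‖²` and using the angle condition gives
`‖f t‖² ≥ (‖f s‖ + c‖f t - f s‖)²`. For `c > 1` the condition contradicts Cauchy–Schwarz unless
`f s = 0` or `f t = f s`, so `f` can only move while it sits at the origin; the intermediate value
theorem for `‖f‖` then forces `f` to be constant. -/

open Set

section InnerProductSpace

variable {E : Type*} [NormedAddCommGroup E] [InnerProductSpace ℝ E]

theorem norm_add_ge_of_inner_ge {x d : E} {c : ℝ} (hc₀ : 0 ≤ c) (hc₁ : c ≤ 1)
    (h : c * ‖x‖ * ‖d‖ ≤ inner ℝ x d) : ‖x‖ + c * ‖d‖ ≤ ‖x + d‖ := by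
  have hsq : (‖x‖ + c * ‖d‖) ^ 2 ≤ ‖x + d‖ ^ 2 := by
    have hc_sq : c ^ 2 * ‖d‖ ^ 2 ≤ ‖d‖ ^ 2 := by
      have : c ^ 2 ≤ 1 := pow_le_one₀ hc₀ hc₁
      nlinarith [sq_nonneg ‖d‖]
    rw [norm_add_sq_real]
    nlinarith
  exact (pow_le_pow_iff_left₀ (by positivity) (norm_nonneg _) two_ne_zero).1 hsq

theorem eq_zero_or_eq_zero_of_inner_ge {x d : E} {c : ℝ} (hc : 1 < c)
    (h : c * ‖x‖ * ‖d‖ ≤ inner ℝ x d) : x = 0 ∨ d = 0 := by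
  have hprod : ‖x‖ * ‖d‖ = 0 := by
    have := real_inner_le_norm x d
    nlinarith [mul_nonneg (norm_nonneg x) (norm_nonneg d)]
  simpa only [mul_eq_zero, norm_eq_zero] using hprod

end InnerProductSpace

theorem ContinuousOn.eq_of_forall_lt_imp_eq_zero_or_eq {E : Type*} [NormedAddCommGroup E]
    {f : ℝ → E} {s t : ℝ} (hst : s < t) (hf : ContinuousOn f (Icc s t))
    (h : ∀ a ∈ Icc s t, ∀ b ∈ Icc s t, a < b → f a = 0 ∨ f a = f b) : f s = f t := by
  by_contra hne
  have hs₀ : f s = 0 := (h s (left_mem_Icc.2 hst.le) t (right_mem_Icc.2 hst.le) hst).resolve_right hne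
  have ht₀ : 0 < ‖f t‖ := norm_pos_iff.2 fun ht => hne (hs₀.trans ht.symm)
  have hmid : ‖f t‖ / 2 ∈ Icc ‖f s‖ ‖f t‖ := by
    rw [hs₀, norm_zero]
    constructor <;> linarith
  obtain ⟨u, hu, hfu⟩ := intermediate_value_Icc hst.le hf.norm hmid
  have hfu : ‖f u‖ = ‖f t‖ / 2 := hfu
  have hut : f u ≠ f t := fun h => by rw [h] at hfu; linarith
  have hu_lt : u < t := lt_of_le_of_ne hu.2 fun h => hut (h ▸ rfl)
  rcases h u hu t (right_mem_Icc.2 hst.le) hu_lt with hu₀ | hu_eq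
  · rw [hu₀, norm_zero] at hfu
    linarith
  · exact hut hu_eq

/-- If `f : [t₀, t₁] → ℝⁿ` is continuous and for all `s < t`,
`⟪f(s), f(t) − f(s)⟫ ≥ c‖f(s)‖·‖f(t) − f(s)‖` with `c > 0`, then for all `s < t`,
`‖f(t)‖ − ‖f(s)‖ ≥ c‖f(t) − f(s)‖`; in particular `t ↦ ‖f(t)‖` is strictly increasing
wherever `f` is non-constant. -/
theorem norm_increasing_of_transverse {n : ℕ} (t₀ t₁ : ℝ)
    (f : ℝ → EuclideanSpace ℝ (Fin n)) (c : ℝ) (hc : 0 < c)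
    (hcont : ContinuousOn f (Set.Icc t₀ t₁))
    (hangle : ∀ s ∈ Set.Icc t₀ t₁, ∀ t ∈ Set.Icc t₀ t₁, s < t →
      (inner ℝ (f s) (f t - f s) : ℝ) ≥ c * ‖f s‖ * ‖f t - f s‖) :
    ∀ s ∈ Set.Icc t₀ t₁, ∀ t ∈ Set.Icc t₀ t₁, s < t →
      ‖f t‖ - ‖f s‖ ≥ c * ‖f t - f s‖ ∧ (f s ≠ f t → ‖f s‖ < ‖f t‖) := by
  intro s hs t ht hst
  rcases le_or_gt c 1 with hc₁ | hc₁
  · have hgrowth : ‖f s‖ + c * ‖f t - f s‖ ≤ ‖f t‖ := by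
      simpa only [add_sub_cancel] using norm_add_ge_of_inner_ge hc.le hc₁ (hangle s hs t ht hst)
    refine ⟨by linarith, fun hne => ?_⟩
    have : 0 < ‖f t - f s‖ := norm_pos_iff.2 (sub_ne_zero.2 (Ne.symm hne))
    nlinarith
  · have hsub : Icc s t ⊆ Icc t₀ t₁ := Icc_subset_Icc hs.1 ht.2
    have hconst : f s = f t := (hcont.mono hsub).eq_of_forall_lt_imp_eq_zero_or_eq hst
      fun a ha b hb hab => (eq_zero_or_eq_zero_of_inner_ge hc₁
        (hangle a (hsub ha) b (hsub hb) hab)).imp_right fun hd => (sub_eq_zero.1 hd).symm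
    simp [hconst]
end

section
/- Let B = B(y, r) ⊂ ℝⁿ be a ball, α > 0, and let f : ℝⁿ → ℝ satisfy C₀⁻¹ ≤ f ≤ C₀ and |f(x) − f(z)| ≤ C₁‖x − z‖^α for all x, z. Let E, F be Borel sets with E ∩ B and F ∩ B of finite 2-dimensional Hausdorff measure satisfying ℋ²(E ∩ B) ≤ C_d r² and ℋ²(F ∩ B) ≤ C_d r², and suppose ∫_{E ∩ B} f dℋ² ≤ ∫_{F ∩ B} f dℋ². Then ℋ²(E ∩ B) ≤ ℋ²(F ∩ B) + 2 C₀ C₁ C_d (2r)^α r² / 1, i.e. ℋ²(E ∩ B) ≤ ℋ²(F ∩ B) + 2^{1+α} C₀ C₁ C_d r^{2+α}. -/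
/-!
On `B`, the Hölder bound gives `|f - f(y)| ≤ c := C₁(2r)^α`, so
`(f(y) - c) ℋ²(E ∩ B) ≤ ∫_{E ∩ B} f ≤ ∫_{F ∩ B} f ≤ (f(y) + c) ℋ²(F ∩ B)`.
Hence `f(y) (ℋ²(E ∩ B) - ℋ²(F ∩ B)) ≤ c (ℋ²(E ∩ B) + ℋ²(F ∩ B)) ≤ 2 c C_d r²`,
and dividing by `f(y) ≥ C₀⁻¹` gives the claim.
-/

open MeasureTheory Filter Topology

theorem continuous_of_abs_sub_le_mul_norm_rpow {E : Type*} [SeminormedAddCommGroup E]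
    {f : E → ℝ} {C α : ℝ} (hα : 0 < α) (hf : ∀ x z, |f x - f z| ≤ C * ‖x - z‖ ^ α) :
    Continuous f := by
  refine continuous_iff_continuousAt.2 fun z => ?_
  have hlim : Tendsto (fun x => C * ‖x - z‖ ^ α) (𝓝 z) (𝓝 0) := by
    have hnorm : Tendsto (fun x => ‖x - z‖) (𝓝 z) (𝓝 0) :=
      tendsto_iff_norm_sub_tendsto_zero.1 tendsto_id
    simpa [Real.zero_rpow hα.ne'] using (hnorm.rpow_const (Or.inr hα.le)).const_mul C
  exact tendsto_iff_norm_sub_tendsto_zero.2 <|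
    squeeze_zero (fun _ => norm_nonneg _) (fun x => hf x z) hlim

theorem abs_sub_le_of_mem_ball {E : Type*} [SeminormedAddCommGroup E]
    {f : E → ℝ} {C α r : ℝ} {x y z : E} (hC : 0 ≤ C) (hα : 0 ≤ α)
    (hf : ∀ x z, |f x - f z| ≤ C * ‖x - z‖ ^ α)
    (hx : x ∈ Metric.ball y r) (hz : z ∈ Metric.ball y r) :
    |f x - f z| ≤ C * (2 * r) ^ α := by
  have hxz : ‖x - z‖ ≤ 2 * r := by
    rw [← dist_eq_norm]
    linarith [dist_triangle_right x z y, Metric.mem_ball.1 hx, Metric.mem_ball.1 hz]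
  exact (hf x z).trans (by gcongr)

theorem abs_setIntegral_sub_le {X : Type*} [MeasurableSpace X] {μ : Measure X} {s : Set X}
    {f : X → ℝ} {m c : ℝ} (hs : MeasurableSet s) (hμs : μ s ≠ ⊤)
    (hf : AEStronglyMeasurable f (μ.restrict s)) (hfs : ∀ x ∈ s, |f x - m| ≤ c) :
    |∫ x in s, f x ∂μ - m * μ.real s| ≤ c * μ.real s := by
  have hint : IntegrableOn f s μ := by
    refine IntegrableOn.of_bound hμs.lt_top hf (|m| + c) <|
      ae_restrict_of_forall_mem hs fun x hx => ?_
    rw [Real.norm_eq_abs]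
    linarith [abs_sub_abs_le_abs_sub (f x) m, hfs x hx]
  have hsub : ∫ x in s, (f x - m) ∂μ = ∫ x in s, f x ∂μ - m * μ.real s := by
    rw [integral_sub hint (integrableOn_const hμs), setIntegral_const, smul_eq_mul, mul_comm]
  rw [← hsub, ← Real.norm_eq_abs]
  exact norm_setIntegral_le_of_norm_le_const hμs.lt_top fun x hx => hfs x hx

theorem le_add_of_mul_sub_le_mul_add {C₀ m c a b D : ℝ} (hC₀ : 0 < C₀) (hm : C₀⁻¹ ≤ m)
    (hc : 0 ≤ c) (hD : 0 ≤ D) (haD : a ≤ D) (hbD : b ≤ D)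
    (h : m * (a - b) ≤ c * (a + b)) :
    a ≤ b + 2 * C₀ * c * D := by
  have hcD : 0 ≤ C₀ * c * D := by positivity
  rcases le_or_gt a b with hab | hab
  · linarith
  have hC₀m : 1 ≤ C₀ * m := by rw [mul_comm]; exact (inv_le_iff_one_le_mul₀ hC₀).1 hm
  calc a = 1 * (a - b) + b := by ring
    _ ≤ C₀ * (m * (a - b)) + b := by rw [← mul_assoc]; gcongr
    _ ≤ C₀ * (c * (a + b)) + b := by gcongr
    _ ≤ C₀ * (c * (D + D)) + b := by gcongr
    _ = b + 2 * C₀ * c * D := by ring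

theorem weighted_minimizer_almost_minimal_general {n : ℕ}
    (y : EuclideanSpace ℝ (Fin n)) (r α : ℝ) (hr : 0 < r) (hα : 0 < α)
    (C₀ C₁ Cd : ℝ) (hC₀ : 1 ≤ C₀) (hC₁ : 1 ≤ C₁) (hCd : 1 ≤ Cd)
    (f : EuclideanSpace ℝ (Fin n) → ℝ)
    (hf_lower : ∀ x, C₀⁻¹ ≤ f x)
    (hf_holder : ∀ x z, |f x - f z| ≤ C₁ * ‖x - z‖ ^ α)
    (E F : Set (EuclideanSpace ℝ (Fin n)))
    (hE : MeasurableSet E) (hF : MeasurableSet F)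
    (hEfin : μH[2] (E ∩ Metric.ball y r) ≠ ⊤)
    (hFfin : μH[2] (F ∩ Metric.ball y r) ≠ ⊤)
    (hEb : μH[2] (E ∩ Metric.ball y r) ≤ ENNReal.ofReal (Cd * r ^ 2))
    (hFb : μH[2] (F ∩ Metric.ball y r) ≤ ENNReal.ofReal (Cd * r ^ 2))
    (hint : ∫ x in E ∩ Metric.ball y r, f x ∂(μH[2]) ≤
      ∫ x in F ∩ Metric.ball y r, f x ∂(μH[2])) :
    μH[2] (E ∩ Metric.ball y r) ≤ μH[2] (F ∩ Metric.ball y r) +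
      ENNReal.ofReal (2 ^ (1 + α) * C₀ * C₁ * Cd * r ^ (2 + α)) := by
  set B := Metric.ball y r
  have hcont := continuous_of_abs_sub_le_mul_norm_rpow hα hf_holder
  have hosc : ∀ x ∈ B, |f x - f y| ≤ C₁ * (2 * r) ^ α := fun x hx =>
    abs_sub_le_of_mem_ball (by linarith) hα.le hf_holder hx (Metric.mem_ball_self hr)
  have hIE := abs_setIntegral_sub_le (hE.inter measurableSet_ball) hEfin
    hcont.aestronglyMeasurable fun x hx => hosc x hx.2
  have hIF := abs_setIntegral_sub_le (hF.inter measurableSet_ball) hFfin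
    hcont.aestronglyMeasurable fun x hx => hosc x hx.2
  rw [abs_le] at hIE hIF
  have hD : 0 ≤ Cd * r ^ 2 := by positivity
  have hK : 2 ^ (1 + α) * C₀ * C₁ * Cd * r ^ (2 + α) =
      2 * C₀ * (C₁ * (2 * r) ^ α) * (Cd * r ^ 2) := by
    rw [Real.rpow_add two_pos, Real.rpow_one, Real.rpow_add hr,
      Real.mul_rpow zero_le_two hr.le, Real.rpow_two]
    ring
  have hK0 : 0 ≤ 2 ^ (1 + α) * C₀ * C₁ * Cd * r ^ (2 + α) := by rw [hK]; positivity
  rw [← ENNReal.ofReal_toReal hFfin, ← ENNReal.ofReal_add ENNReal.toReal_nonneg hK0,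
    ENNReal.le_ofReal_iff_toReal_le hEfin (by positivity), hK]
  refine le_add_of_mul_sub_le_mul_add (by linarith) (hf_lower y) (by positivity) hD
    (ENNReal.toReal_le_of_le_ofReal hD hEb) (ENNReal.toReal_le_of_le_ofReal hD hFb) ?_
  simp only [Measure.real] at hIE hIF
  linarith

/-- Freezing the Hölder density at the center of the ball: if `C₀⁻¹ ≤ f ≤ C₀`,
`|f(x) − f(z)| ≤ C₁‖x − z‖^α`, `E ∩ B` and `F ∩ B` have `ℋ²`-measure at most `C_d r²`
in the ball `B = B(y, r)`, and `∫_{E ∩ B} f dℋ² ≤ ∫_{F ∩ B} f dℋ²`, then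
`ℋ²(E ∩ B) ≤ ℋ²(F ∩ B) + 2^{1+α} C₀ C₁ C_d r^{2+α}`. -/
theorem weighted_minimizer_almost_minimal {n : ℕ}
    (y : EuclideanSpace ℝ (Fin n)) (r α : ℝ) (hr : 0 < r) (hα : 0 < α)
    (C₀ C₁ Cd : ℝ) (hC₀ : 1 ≤ C₀) (hC₁ : 1 ≤ C₁) (hCd : 1 ≤ Cd)
    (f : EuclideanSpace ℝ (Fin n) → ℝ)
    (hf_lower : ∀ x, C₀⁻¹ ≤ f x) (hf_upper : ∀ x, f x ≤ C₀)
    (hf_holder : ∀ x z, |f x - f z| ≤ C₁ * ‖x - z‖ ^ α)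
    (E F : Set (EuclideanSpace ℝ (Fin n)))
    (hE : MeasurableSet E) (hF : MeasurableSet F)
    (hEfin : μH[2] (E ∩ Metric.ball y r) ≠ ⊤)
    (hFfin : μH[2] (F ∩ Metric.ball y r) ≠ ⊤)
    (hEb : μH[2] (E ∩ Metric.ball y r) ≤ ENNReal.ofReal (Cd * r ^ 2))
    (hFb : μH[2] (F ∩ Metric.ball y r) ≤ ENNReal.ofReal (Cd * r ^ 2))
    (hint : ∫ x in E ∩ Metric.ball y r, f x ∂(μH[2]) ≤
      ∫ x in F ∩ Metric.ball y r, f x ∂(μH[2])) :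
    μH[2] (E ∩ Metric.ball y r) ≤ μH[2] (F ∩ Metric.ball y r) +
      ENNReal.ofReal (2 ^ (1 + α) * C₀ * C₁ * Cd * r ^ (2 + α)) :=
  weighted_minimizer_almost_minimal_general y r α hr hα C₀ C₁ Cd hC₀ hC₁ hCd f hf_lower hf_holder E
    F hE hF hEfin hFfin hEb hFb hint
end
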